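/- arXiv:2304.09771 — 3 statements merged into one kernel-verified Lean document; each statement's English description precedes it below -/
import Mathlib

section
/- In any scheme satisfying the independence, uniformity, message and correctness constraints, for every user u ∈ [K] it holds that H(X_u | (W_k, Z_k)_{k∈[K]\{u}}) ≥ L. -/
open Finset
open scoped Classical

namespace WeakSecureSummation

noncomputable section

/-- Probability that random variable `X` takes value `a`, w.r.t. pmf `p`. -/
def pr {Ω α : Type*} [Fintype Ω] [DecidableEq α] (p : Ω → ℝ) (X : Ω → α) (a : α) : ℝ :=
  ∑ ω, if X ω = a then p ω else 0

/-- Shannon entropy of `X` in `q`-ary units. -/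
def H {Ω α : Type*} [Fintype Ω] [Fintype α] [DecidableEq α]
    (q : ℕ) (p : Ω → ℝ) (X : Ω → α) : ℝ :=
  -∑ a : α, pr p X a * (Real.log (pr p X a) / Real.log (q : ℝ))

/-- Conditional entropy `H(X | Y)` in `q`-ary units. -/
def Hc {Ω α β : Type*} [Fintype Ω] [Fintype α] [DecidableEq α] [Fintype β] [DecidableEq β]
    (q : ℕ) (p : Ω → ℝ) (X : Ω → α) (Y : Ω → β) : ℝ :=
  H q p (fun ω => (X ω, Y ω)) - H q p Y

/-- Conditional mutual information `I(X ; Y | Z)` in `q`-ary units. -/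
def MIc {Ω α β γ : Type*} [Fintype Ω] [Fintype α] [DecidableEq α] [Fintype β] [DecidableEq β]
    [Fintype γ] [DecidableEq γ] (q : ℕ) (p : Ω → ℝ) (X : Ω → α) (Y : Ω → β) (Z : Ω → γ) : ℝ :=
  Hc q p X Z + Hc q p Y Z - Hc q p (fun ω => (X ω, Y ω)) Z

/-- A secure-summation scheme for `K` users over the finite field `F`:
input length `L`, message length `LX`, source-key length `LZ`, a finite sample
space `Ω` with pmf `p`, inputs `W k`, source key `ZS`, keys `Z k` (with value
types `ZT k`), and messages `X k`. -/
structure Scheme (K : ℕ) (F : Type) [Field F] [Fintype F] [DecidableEq F] where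
  L : ℕ
  LX : ℕ
  LZ : ℕ
  Ω : Type
  [finΩ : Fintype Ω]
  p : Ω → ℝ
  W : Fin K → Ω → Fin L → F
  ZS : Ω → Fin LZ → F
  ZT : Fin K → Type
  [finZT : ∀ k, Fintype (ZT k)]
  [decZT : ∀ k, DecidableEq (ZT k)]
  Z : ∀ k, Ω → ZT k
  X : Fin K → Ω → Fin LX → F

attribute [instance] Scheme.finΩ Scheme.finZT Scheme.decZT

variable {K : ℕ} {F : Type} [Field F] [Fintype F] [DecidableEq F]

/-- The sum of all inputs. -/
def Scheme.sumW (C : Scheme K F) : C.Ω → (Fin C.L → F) := fun ω => ∑ k, C.W k ω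

/-- The tuple of inputs `(W k)_{k ∈ A}`. -/
def Scheme.Wtup (C : Scheme K F) (A : Finset (Fin K)) :
    C.Ω → ({x // x ∈ A} → (Fin C.L → F)) :=
  fun ω k => C.W k.1 ω

/-- The tuple of keys `(Z k)_{k ∈ A}`. -/
def Scheme.Ztup (C : Scheme K F) (A : Finset (Fin K)) :
    C.Ω → ((k : {x // x ∈ A}) → C.ZT k.1) :=
  fun ω k => C.Z k.1 ω

/-- The tuple `((W k, Z k))_{k ∈ A}`. -/
def Scheme.WZtup (C : Scheme K F) (A : Finset (Fin K)) :
    C.Ω → ((k : {x // x ∈ A}) → (Fin C.L → F) × C.ZT k.1) :=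
  fun ω k => (C.W k.1 ω, C.Z k.1 ω)

/-- The tuple of all messages `(X 1, …, X K)`. -/
def Scheme.Xall (C : Scheme K F) : C.Ω → (Fin K → Fin C.LX → F) := fun ω k => C.X k ω

/-- The tuple of all inputs `(W 1, …, W K)`. -/
def Scheme.Wall (C : Scheme K F) : C.Ω → (Fin K → Fin C.L → F) := fun ω k => C.W k ω

/-- `p` is a valid probability mass function. -/
def Scheme.ValidP (C : Scheme K F) : Prop :=
  (∀ ω, 0 ≤ C.p ω) ∧ (∑ ω, C.p ω = 1)

/-- Inputs are uniform on `F^L`, mutually independent, and independent of the source key. -/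
def Scheme.IndepUnif (C : Scheme K F) : Prop :=
  (∀ (k : Fin K) (a : Fin C.L → F), pr C.p (C.W k) a = ((Fintype.card F : ℝ) ^ C.L)⁻¹) ∧
  (∀ w : Fin K → Fin C.L → F, pr C.p C.Wall w = ∏ k, pr C.p (C.W k) (w k)) ∧
  (∀ (w : Fin K → Fin C.L → F) (z : Fin C.LZ → F),
    pr C.p (fun ω => (C.Wall ω, C.ZS ω)) (w, z) = pr C.p C.Wall w * pr C.p C.ZS z)

/-- Each key is a deterministic function of the source key, and each message is a
deterministic function of the own input and key. -/
def Scheme.Det (C : Scheme K F) : Prop :=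
  (∀ k, ∃ f : (Fin C.LZ → F) → C.ZT k, ∀ ω, C.Z k ω = f (C.ZS ω)) ∧
  (∀ k, ∃ g : (Fin C.L → F) → C.ZT k → (Fin C.LX → F), ∀ ω, C.X k ω = g (C.W k ω) (C.Z k ω))

/-- Correctness: the sum of inputs is decodable from all messages. -/
def Scheme.Correct (C : Scheme K F) : Prop :=
  Hc (Fintype.card F) C.p C.sumW C.Xall = 0

/-- All the model constraints except security. -/
def Scheme.Good (C : Scheme K F) : Prop :=
  C.ValidP ∧ C.IndepUnif ∧ C.Det ∧ C.Correct

/-- Security for a single pair: colluding with users in `T`, nothing is revealed about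
the inputs in `S` beyond the sum and what the colluders know. -/
def Scheme.SecureFor (C : Scheme K F) (S T : Finset (Fin K)) : Prop :=
  MIc (Fintype.card F) C.p (C.Wtup S) C.Xall (fun ω => (C.sumW ω, C.WZtup T ω)) = 0

/-- A security pattern: families of security input sets and colluding user sets. -/
structure Pattern (K M N : ℕ) where
  S : Fin M → Finset (Fin K)
  T : Fin N → Finset (Fin K)

/-- The family of security input sets is monotone (closed under subsets). -/
def Pattern.MonoS {K M N : ℕ} (P : Pattern K M N) : Prop :=
  ∀ (m : Fin M) (A : Finset (Fin K)), A ⊆ P.S m → ∃ m', P.S m' = A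

/-- The family of colluding user sets is monotone (closed under subsets). -/
def Pattern.MonoT {K M N : ℕ} (P : Pattern K M N) : Prop :=
  ∀ (n : Fin N) (A : Finset (Fin K)), A ⊆ P.T n → ∃ n', P.T n' = A

/-- A valid security pattern: monotone families, nonempty union of security sets,
and every colluding set of size at most `K - 2`. -/
def Pattern.Valid {K M N : ℕ} (P : Pattern K M N) : Prop :=
  P.MonoS ∧ P.MonoT ∧ (∃ m, (P.S m).Nonempty) ∧ (∀ n, (P.T n).card ≤ K - 2)

/-- The scheme is secure for every pair of the pattern. -/
def Scheme.Secure {M N : ℕ} (C : Scheme K F) (P : Pattern K M N) : Prop :=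
  ∀ m n, C.SecureFor (P.S m) (P.T n)

/-- Implicit security input set `S_I`. -/
def Pattern.SI {K M N : ℕ} (P : Pattern K M N) : Finset (Fin K) :=
  (Finset.univ.filter fun u =>
      ∃ m n, (P.S m ∪ P.T n).card = K - 1 ∧ Finset.univ \ (P.S m ∪ P.T n) = {u}) \
    Finset.univ.biUnion P.S

/-- Total security input set `S̄`. -/
def Pattern.Sbar {K M N : ℕ} (P : Pattern K M N) : Finset (Fin K) :=
  Finset.univ.biUnion P.S ∪ P.SI

/-- `A_{m,n} = (S_m ∪ T_n) ∩ S̄`. -/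
def Pattern.A {K M N : ℕ} (P : Pattern K M N) (m : Fin M) (n : Fin N) : Finset (Fin K) :=
  (P.S m ∪ P.T n) ∩ P.Sbar

/-- `a* = max_{m,n} |A_{m,n}|`. -/
def Pattern.aStar {K M N : ℕ} (P : Pattern K M N) : ℕ :=
  Finset.univ.sup fun mn : Fin M × Fin N => (P.A mn.1 mn.2).card

/-- `Q`: union of `S_m ∪ T_n` over all pairs attaining `a*`. -/
def Pattern.Q {K M N : ℕ} (P : Pattern K M N) : Finset (Fin K) :=
  Finset.univ.biUnion fun mn : Fin M × Fin N =>
    if (P.A mn.1 mn.2).card = P.aStar then P.S mn.1 ∪ P.T mn.2 else ∅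

/-- Feasibility for the linear program LP(𝒮,𝒯): variables `b k` for `k ∉ S̄`,
nonnegative, with `∑_{k ∈ [K] \ (S_m ∪ T_n)} b k ≥ 1` for every maximal pair. -/
def Pattern.LPFeasible {K M N : ℕ} (P : Pattern K M N) (b : Fin K → ℝ) : Prop :=
  (∀ k, k ∉ P.Sbar → 0 ≤ b k) ∧ (∀ k ∈ P.Sbar, b k = 0) ∧
  ∀ m n, (P.A m n).card = P.aStar → 1 ≤ ∑ k ∈ Finset.univ \ (P.S m ∪ P.T n), b k

/-- LP objective: `max_{m,n : |A_{m,n}| = a*} ∑_{k ∈ T_n \ S̄} b k`. -/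
def Pattern.LPObj {K M N : ℕ} (P : Pattern K M N) (b : Fin K → ℝ) : ℝ :=
  sSup {x : ℝ | ∃ m n, (P.A m n).card = P.aStar ∧ x = ∑ k ∈ P.T n \ P.Sbar, b k}

/-- `b*`: optimal value of the linear program. -/
def Pattern.bStar {K M N : ℕ} (P : Pattern K M N) : ℝ :=
  sInf {v : ℝ | ∃ b, P.LPFeasible b ∧ P.LPObj b = v}

/-- Achievability of key rate `R` for pattern `P`, with a given finite field `F`. -/
def AchWith (K M N : ℕ) (P : Pattern K M N) (R : ℝ) (F : Type)
    [Field F] [Fintype F] [DecidableEq F] : Prop :=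
  ∃ C : Scheme K F, 1 ≤ C.L ∧ C.Good ∧ C.Secure P ∧ (C.LZ : ℝ) / (C.L : ℝ) ≤ R

/-- Achievability of key rate `R`: some finite field (i.e. some prime power `q`)
admits a valid, correct, secure scheme of key rate at most `R`. -/
def Achievable {K M N : ℕ} (P : Pattern K M N) (R : ℝ) : Prop :=
  ∃ (F : Type) (i1 : Field F) (i2 : Fintype F) (i3 : DecidableEq F),
    @AchWith K M N P R F i1 i2 i3

/-- The optimal key rate `R*`: infimum of achievable rates. -/
def optRate {K M N : ℕ} (P : Pattern K M N) : ℝ :=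
  sInf {R : ℝ | Achievable P R}

end
end WeakSecureSummation


/-!
The sum `S = W_u + ∑_{k ≠ u} W_k` can be decoded from `X_u` together with
`Y = (W_k, Z_k)_{k ≠ u}`, because every other message is a function of `Y`. Hence
`H(X_u | Y) ≥ H(S | Y) = H(W_u | Y) = H(W_u) = L`: the first equality because `S - W_u` is a
function of `Y`, the second because `Y` depends only on the other inputs and the source key,
which are independent of `W_u`.
-/

namespace WeakSecureSummation

section Probability

variable {Ω α β γ δ : Type*} [Fintype Ω] [DecidableEq α] [DecidableEq β] [DecidableEq γ]
  [DecidableEq δ] {p : Ω → ℝ} {X : Ω → α} {Y : Ω → β} {Z : Ω → γ}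

theorem pr_nonneg (hp : ∀ ω, 0 ≤ p ω) (X : Ω → α) (a : α) : 0 ≤ pr p X a :=
  Finset.sum_nonneg fun ω _ => ite_nonneg (hp ω) le_rfl

theorem le_pr_self (hp : ∀ ω, 0 ≤ p ω) (X : Ω → α) (ω : Ω) : p ω ≤ pr p X (X ω) :=
  calc p ω = if X ω = X ω then p ω else 0 := (if_pos rfl).symm
    _ ≤ pr p X (X ω) := Finset.single_le_sum (f := fun ω' => if X ω' = X ω then p ω' else 0)
          (fun ω' _ => ite_nonneg (hp ω') le_rfl) (mem_univ ω)

theorem exists_pos_of_pr_pos {a : α} (h : 0 < pr p X a) : ∃ ω, 0 < p ω ∧ X ω = a := by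
  obtain ⟨ω, -, hω⟩ := Finset.exists_lt_of_sum_lt (f := fun _ => (0 : ℝ))
    (by simpa [pr] using h)
  by_cases hX : X ω = a
  · exact ⟨ω, by simpa [hX] using hω, hX⟩
  · simp [hX] at hω

theorem sum_pr [Fintype α] (X : Ω → α) : ∑ a, pr p X a = ∑ ω, p ω := by
  unfold pr
  rw [Finset.sum_comm]
  simp

theorem sum_pr_pair [Fintype α] (X : Ω → α) (Y : Ω → β) (b : β) :
    ∑ a, pr p (fun ω => (X ω, Y ω)) (a, b) = pr p Y b := by
  unfold pr
  rw [Finset.sum_comm]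
  refine Finset.sum_congr rfl fun ω _ => ?_
  by_cases hY : Y ω = b <;> simp [Prod.ext_iff, hY]

theorem pr_pair_le [Fintype α] (hp : ∀ ω, 0 ≤ p ω) (X : Ω → α) (Y : Ω → β) (a : α) (b : β) :
    pr p (fun ω => (X ω, Y ω)) (a, b) ≤ pr p Y b := by
  rw [← sum_pr_pair X Y b]
  exact Finset.single_le_sum (f := fun a' => pr p (fun ω => (X ω, Y ω)) (a', b))
    (fun a' _ => pr_nonneg hp _ _) (mem_univ a)

theorem pr_comp [Fintype α] (f : α → β) (X : Ω → α) (b : β) :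
    pr p (fun ω => f (X ω)) b = ∑ a with f a = b, pr p X a := by
  unfold pr
  rw [Finset.sum_comm]
  refine Finset.sum_congr rfl fun ω _ => ?_
  simp

theorem pr_equiv (e : α ≃ β) (X : Ω → α) (b : β) :
    pr p (fun ω => e (X ω)) b = pr p X (e.symm b) := by
  simp only [pr, Equiv.eq_symm_apply]

def IndepFun (p : Ω → ℝ) (X : Ω → α) (Y : Ω → β) : Prop :=
  ∀ a b, pr p (fun ω => (X ω, Y ω)) (a, b) = pr p X a * pr p Y b

theorem IndepFun.comp [Fintype α] [Fintype β] (h : IndepFun p X Y) (φ : α → γ) (ψ : β → δ) :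
    IndepFun p (fun ω => φ (X ω)) (fun ω => ψ (Y ω)) := by
  intro c d
  have hfiber : ({ab : α × β | (φ ab.1, ψ ab.2) = (c, d)} : Finset (α × β))
      = ({a | φ a = c} : Finset α) ×ˢ ({b | ψ b = d} : Finset β) := by
    ext ⟨a, b⟩
    simp [Prod.ext_iff]
  rw [pr_comp (fun ab : α × β => (φ ab.1, ψ ab.2)) (fun ω => (X ω, Y ω)), pr_comp φ X,
    pr_comp ψ Y, hfiber, Finset.sum_product, Finset.sum_mul_sum]
  exact Finset.sum_congr rfl fun a _ => Finset.sum_congr rfl fun b _ => h a b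

theorem IndepFun.of_pr_pair_eq_mul [Fintype α] (hp1 : ∑ ω, p ω = 1) (g : β → ℝ)
    (h : ∀ a b, pr p (fun ω => (X ω, Y ω)) (a, b) = pr p X a * g b) : IndepFun p X Y := by
  have hg : ∀ b, pr p Y b = g b := fun b => by
    rw [← sum_pr_pair X Y b, Finset.sum_congr rfl fun a _ => h a b, ← Finset.sum_mul, sum_pr,
      hp1, one_mul]
  intro a b
  rw [h, hg]

theorem IndepFun.pair_right [Fintype α] (hp1 : ∑ ω, p ω = 1) (hXY : IndepFun p X Y)
    (hXYZ : IndepFun p (fun ω => (X ω, Y ω)) Z) : IndepFun p X (fun ω => (Y ω, Z ω)) := by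
  refine IndepFun.of_pr_pair_eq_mul hp1 (fun bc => pr p Y bc.1 * pr p Z bc.2) fun a ⟨b, c⟩ => ?_
  have hassoc :=
    pr_equiv (p := p) (Equiv.prodAssoc α β γ) (fun ω => ((X ω, Y ω), Z ω)) (a, (b, c))
  simp only [Equiv.prodAssoc_apply, Equiv.prodAssoc_symm_apply] at hassoc
  rw [hassoc, hXYZ, hXY, mul_assoc]

theorem Hc_summand_nonneg [Fintype α] {q : ℕ} (hq : 1 < q) (hp : ∀ ω, 0 ≤ p ω)
    (X : Ω → α) (Y : Ω → β) (ab : α × β) :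
    0 ≤ pr p (fun ω => (X ω, Y ω)) ab *
      ((Real.log (pr p Y ab.2) - Real.log (pr p (fun ω => (X ω, Y ω)) ab)) / Real.log q) := by
  rcases (pr_nonneg hp (fun ω => (X ω, Y ω)) ab).eq_or_lt with h0 | hpos
  · rw [← h0, zero_mul]
  · refine mul_nonneg hpos.le (div_nonneg (sub_nonneg.2 ?_) ?_)
    · exact Real.log_le_log hpos (pr_pair_le hp X Y ab.1 ab.2)
    · exact Real.log_nonneg (by exact_mod_cast hq.le)

def DeterminedBy (p : Ω → ℝ) (X : Ω → α) (Y : Ω → β) : Prop :=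
  ∀ ω ω', 0 < p ω → 0 < p ω' → Y ω = Y ω' → X ω = X ω'

theorem pr_pair_eq_of_determinedBy [Fintype α] (hp : ∀ ω, 0 ≤ p ω) (h : DeterminedBy p X Y)
    {a : α} {b : β} (hpos : 0 < pr p (fun ω => (X ω, Y ω)) (a, b)) :
    pr p (fun ω => (X ω, Y ω)) (a, b) = pr p Y b := by
  obtain ⟨ω, hω, hab⟩ := exists_pos_of_pr_pos hpos
  have hothers : ∀ a' ∈ univ, a' ≠ a → pr p (fun ω => (X ω, Y ω)) (a', b) = 0 := by
    intro a' _ ha'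
    by_contra hne
    obtain ⟨ω', hω', hab'⟩ := exists_pos_of_pr_pos ((pr_nonneg hp _ _).lt_of_ne' hne)
    simp only [Prod.mk.injEq] at hab hab'
    exact ha' (hab'.1.symm.trans ((h ω' ω hω' hω (hab'.2.trans hab.2.symm)).trans hab.1))
  rw [← sum_pr_pair X Y b, Finset.sum_eq_single_of_mem a (mem_univ a) hothers]

end Probability

section Entropy

variable {Ω α β : Type*} [Fintype Ω] [Fintype α] [DecidableEq α] [Fintype β] [DecidableEq β]
  {p : Ω → ℝ} {q : ℕ} {X : Ω → α} {Y : Ω → β}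

theorem H_comp_of_injective (f : α → β) (hf : Function.Injective f) (X : Ω → α) :
    H q p (fun ω => f (X ω)) = H q p X := by
  have hpr : ∀ a, pr p (fun ω => f (X ω)) (f a) = pr p X a := fun a => by
    simp only [pr, hf.eq_iff]
  have hpr_zero : ∀ b ∉ Set.range f, pr p (fun ω => f (X ω)) b = 0 := fun b hb =>
    Finset.sum_eq_zero fun ω _ => if_neg fun h => hb ⟨X ω, h⟩
  unfold H
  congr 1
  exact (Fintype.sum_of_injective f hf _ _ (fun b hb => by rw [hpr_zero b hb, zero_mul])
    (fun a => by rw [hpr])).symm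

theorem Hc_eq_sum (X : Ω → α) (Y : Ω → β) :
    Hc q p X Y = ∑ ab : α × β, pr p (fun ω => (X ω, Y ω)) ab *
      ((Real.log (pr p Y ab.2) - Real.log (pr p (fun ω => (X ω, Y ω)) ab)) / Real.log q) := by
  have hY : ∑ b, pr p Y b * (Real.log (pr p Y b) / Real.log q)
      = ∑ ab : α × β, pr p (fun ω => (X ω, Y ω)) ab * (Real.log (pr p Y ab.2) / Real.log q) := by
    rw [Fintype.sum_prod_type_right]
    exact Finset.sum_congr rfl fun b _ => by dsimp only; rw [← Finset.sum_mul, sum_pr_pair]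
  unfold Hc H
  rw [hY, neg_sub_neg, ← Finset.sum_sub_distrib]
  exact Finset.sum_congr rfl fun ab _ => by ring

theorem Hc_nonneg (hq : 1 < q) (hp : ∀ ω, 0 ≤ p ω) (X : Ω → α) (Y : Ω → β) :
    0 ≤ Hc q p X Y := by
  rw [Hc_eq_sum]
  exact Finset.sum_nonneg fun ab _ => Hc_summand_nonneg hq hp X Y ab

theorem Hc_eq_zero_of_determinedBy (hp : ∀ ω, 0 ≤ p ω) (h : DeterminedBy p X Y) :
    Hc q p X Y = 0 := by
  rw [Hc_eq_sum]
  refine Finset.sum_eq_zero fun ⟨a, b⟩ _ => ?_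
  rcases (pr_nonneg hp (fun ω => (X ω, Y ω)) (a, b)).eq_or_lt with h0 | hpos
  · rw [← h0, zero_mul]
  · rw [pr_pair_eq_of_determinedBy hp h hpos, sub_self, zero_div, mul_zero]

theorem pr_pair_eq_of_Hc_eq_zero (hq : 1 < q) (hp : ∀ ω, 0 ≤ p ω) (h : Hc q p X Y = 0) {ω : Ω}
    (hω : 0 < p ω) : pr p (fun ω => (X ω, Y ω)) (X ω, Y ω) = pr p Y (Y ω) := by
  have hpos : 0 < pr p (fun ω => (X ω, Y ω)) (X ω, Y ω) := hω.trans_le (le_pr_self hp _ ω)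
  have hposY : 0 < pr p Y (Y ω) := hω.trans_le (le_pr_self hp Y ω)
  rw [Hc_eq_sum, Finset.sum_eq_zero_iff_of_nonneg fun ab _ => Hc_summand_nonneg hq hp X Y ab] at h
  rcases mul_eq_zero.1 (h (X ω, Y ω) (mem_univ _)) with h0 | hlog
  · exact absurd h0 hpos.ne'
  · rw [div_eq_zero_iff, sub_eq_zero] at hlog
    rcases hlog with hlog | hlq
    · exact Real.log_injOn_pos hpos hposY hlog.symm
    · exact absurd hlq (Real.log_pos (by exact_mod_cast hq)).ne'

theorem determinedBy_of_Hc_eq_zero (hq : 1 < q) (hp : ∀ ω, 0 ≤ p ω) (h : Hc q p X Y = 0) :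
    DeterminedBy p X Y := by
  intro ω ω' hω hω' hY
  by_contra hne
  have h1 := pr_pair_eq_of_Hc_eq_zero hq hp h hω
  have h2 := pr_pair_eq_of_Hc_eq_zero hq hp h hω'
  rw [← hY] at h2
  have hsum : ∑ a ∈ {X ω, X ω'}, pr p (fun ω => (X ω, Y ω)) (a, Y ω) ≤ pr p Y (Y ω) := by
    rw [← sum_pr_pair X Y]
    exact Finset.sum_le_sum_of_subset_of_nonneg (subset_univ _) fun a _ _ => pr_nonneg hp _ _
  rw [Finset.sum_pair hne, h1, h2] at hsum
  linarith [hω.trans_le (le_pr_self hp Y ω)]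

theorem H_le_of_eq_comp (hq : 1 < q) (hp : ∀ ω, 0 ≤ p ω) (f : α → β)
    (hY : ∀ ω, Y ω = f (X ω)) : H q p Y ≤ H q p X := by
  have hgraph : H q p (fun ω => (X ω, Y ω)) = H q p X := by
    simp_rw [hY]
    exact H_comp_of_injective (fun a => (a, f a)) (fun a a' h => congrArg Prod.fst h) X
  have := Hc_nonneg hq hp X Y
  unfold Hc at this
  linarith

theorem H_pair_eq_of_eq_add [AddGroup α] {S : Ω → α} (φ : β → α)
    (hS : ∀ ω, S ω = X ω + φ (Y ω)) :
    H q p (fun ω => (S ω, Y ω)) = H q p (fun ω => (X ω, Y ω)) := by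
  have hinj : Function.Injective fun xy : α × β => (xy.1 + φ xy.2, xy.2) := by
    intro xy xy' h
    obtain ⟨hx, hy⟩ := Prod.mk.inj h
    rw [hy] at hx
    exact Prod.ext (add_right_cancel hx) hy
  simp_rw [hS]
  exact H_comp_of_injective _ hinj (fun ω => (X ω, Y ω))

theorem H_pair_eq_add_of_indepFun (hp1 : ∑ ω, p ω = 1) (h : IndepFun p X Y) :
    H q p (fun ω => (X ω, Y ω)) = H q p X + H q p Y := by
  have hsplit : ∀ a b, pr p X a * pr p Y b * (Real.log (pr p X a * pr p Y b) / Real.log q)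
      = pr p Y b * (pr p X a * (Real.log (pr p X a) / Real.log q))
        + pr p X a * (pr p Y b * (Real.log (pr p Y b) / Real.log q)) := by
    intro a b
    rcases eq_or_ne (pr p X a) 0 with ha | ha
    · simp [ha]
    rcases eq_or_ne (pr p Y b) 0 with hb | hb
    · simp [hb]
    rw [Real.log_mul ha hb]
    ring
  simp only [H, Fintype.sum_prod_type, h _ _, hsplit, Finset.sum_add_distrib, ← Finset.sum_mul,
    ← Finset.mul_sum, sum_pr, hp1]
  ring

theorem H_eq_of_uniform {n : ℕ} (hq : 1 < q) (hcard : Fintype.card α = q ^ n)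
    (h : ∀ a, pr p X a = ((q : ℝ) ^ n)⁻¹) : H q p X = n := by
  have hqn : ((q : ℝ) ^ n) ≠ 0 := by positivity
  have hlq : Real.log q ≠ 0 := (Real.log_pos (by exact_mod_cast hq)).ne'
  simp only [H, h, Finset.sum_const, Finset.card_univ, hcard, Real.log_inv, Real.log_pow,
    nsmul_eq_mul, Nat.cast_pow]
  field_simp

end Entropy

section Scheme

variable {K : ℕ} {F : Type} [Field F] [Fintype F] [DecidableEq F] (C : Scheme K F) (u : Fin K)

theorem Scheme.sumW_eq_add (ω : C.Ω) :
    C.sumW ω = C.W u ω + ∑ k, (C.WZtup (univ \ {u}) ω k).1 := by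
  rw [Scheme.sumW, ← Finset.add_sum_erase univ _ (mem_univ u), Finset.erase_eq]
  exact congrArg _ (Finset.sum_coe_sort (univ \ {u}) (fun k => C.W k ω)).symm

theorem Scheme.H_W (hind : C.IndepUnif) : H (Fintype.card F) C.p (C.W u) = C.L :=
  H_eq_of_uniform Fintype.one_lt_card (by simp) (hind.1 u)

theorem Scheme.indepFun_W_WZtup_compl (hp : C.ValidP) (hind : C.IndepUnif) (hdet : C.Det) :
    IndepFun C.p (C.W u) (C.WZtup (univ \ {u})) := by
  obtain ⟨-, hWall, hWZS⟩ := hind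
  choose f hf using hdet.1
  let e := Equiv.funSplitAt u (Fin C.L → F)
  have hsplit : IndepFun C.p (C.W u) (fun ω (j : {j // j ≠ u}) => C.W j ω) := by
    refine IndepFun.of_pr_pair_eq_mul hp.2 (fun r => ∏ j : {j // j ≠ u}, pr C.p (C.W j) (r j))
      fun a r => ?_
    have hu : e.symm (a, r) u = a := by simp [e]
    have hr : ∀ j : {j // j ≠ u}, e.symm (a, r) j = r j := fun j => by simp [e, j.2]
    rw [show (fun ω => (C.W u ω, fun (j : {j // j ≠ u}) => C.W j ω)) = fun ω => e (C.Wall ω)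
      from rfl, pr_equiv, hWall,
      Fintype.prod_eq_mul_prod_subtype_ne (fun k => pr C.p (C.W k) (e.symm (a, r) k)) u, hu]
    simp only [hr]
  have hrest : IndepFun C.p (fun ω => (C.W u ω, fun (j : {j // j ≠ u}) => C.W j ω)) C.ZS :=
    IndepFun.comp (X := C.Wall) hWZS e id
  let ψ : ({j // j ≠ u} → Fin C.L → F) × (Fin C.LZ → F) →
      (k : {x // x ∈ univ \ {u}}) → (Fin C.L → F) × C.ZT k.1 :=
    fun rz k => (rz.1 ⟨k.1, fun h => (mem_sdiff.1 k.2).2 (mem_singleton.2 h)⟩, f k.1 rz.2)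
  have hY : C.WZtup (univ \ {u}) = fun ω => ψ (fun j => C.W j ω, C.ZS ω) := by
    funext ω k
    simp [ψ, Scheme.WZtup, hf]
  rw [hY]
  exact (hsplit.pair_right hp.2 hrest).comp id ψ

theorem Scheme.sumW_determinedBy (hp : C.ValidP) (hdet : C.Det) (hcorr : C.Correct) :
    DeterminedBy C.p C.sumW (fun ω => (C.X u ω, C.WZtup (univ \ {u}) ω)) := by
  have hXall := determinedBy_of_Hc_eq_zero Fintype.one_lt_card hp.1 hcorr
  intro ω ω' hω hω' h
  refine hXall ω ω' hω hω' (funext fun k => ?_)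
  obtain ⟨hXu, hY⟩ := Prod.mk.inj h
  obtain ⟨g, hg⟩ := hdet.2 k
  by_cases hk : k = u
  · subst hk
    exact hXu
  · have hWZ := congrFun hY ⟨k, by simpa using hk⟩
    simp only [Scheme.WZtup, Prod.mk.injEq] at hWZ
    change C.X k ω = C.X k ω'
    rw [hg, hg, hWZ.1, hWZ.2]

end Scheme

end WeakSecureSummation

open WeakSecureSummation in
theorem message_entropy_lower_bound_general {K : ℕ}
    {F : Type} [Field F] [Fintype F] [DecidableEq F]
    (C : Scheme K F) (hGood : C.Good) :
    ∀ u : Fin K,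
      (C.L : ℝ) ≤ Hc (Fintype.card F) C.p (C.X u) (C.WZtup (Finset.univ \ {u})) := by
  intro u
  obtain ⟨hp, hind, hdet, hcorr⟩ := hGood
  set q := Fintype.card F
  have hq : 1 < q := Fintype.one_lt_card
  set Y := C.WZtup (univ \ {u})
  have hS :
      H q C.p (fun ω => (C.sumW ω, (C.X u ω, Y ω))) = H q C.p (fun ω => (C.X u ω, Y ω)) :=
    sub_eq_zero.1 (Hc_eq_zero_of_determinedBy hp.1 (C.sumW_determinedBy u hp hdet hcorr))
  refine le_sub_iff_add_le.2 ?_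
  calc (C.L : ℝ) + H q C.p Y = H q C.p (C.W u) + H q C.p Y := by rw [C.H_W u hind]
    _ = H q C.p (fun ω => (C.W u ω, Y ω)) :=
      (H_pair_eq_add_of_indepFun hp.2 (C.indepFun_W_WZtup_compl u hp hind hdet)).symm
    _ = H q C.p (fun ω => (C.sumW ω, Y ω)) :=
      (H_pair_eq_of_eq_add (Y := Y) (fun y => ∑ k, (y k).1) (C.sumW_eq_add u)).symm
    _ ≤ H q C.p (fun ω => (C.sumW ω, (C.X u ω, Y ω))) :=
      H_le_of_eq_comp hq hp.1 (fun t => (t.1, t.2.2)) fun _ => rfl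
    _ = H q C.p (fun ω => (C.X u ω, Y ω)) := hS

open WeakSecureSummation in
/-- `H(X_u | (W_k, Z_k)_{k ∈ [K] \ {u}}) ≥ L` for every user `u`. -/
theorem message_entropy_lower_bound {K : ℕ} (hK : 2 ≤ K)
    {F : Type} [Field F] [Fintype F] [DecidableEq F]
    (C : Scheme K F) (hL : 1 ≤ C.L) (hGood : C.Good) :
    ∀ u : Fin K,
      (C.L : ℝ) ≤ Hc (Fintype.card F) C.p (C.X u) (C.WZtup (Finset.univ \ {u})) :=
  message_entropy_lower_bound_general C hGood
end

section
/- Suppose a* ≤ K−1, a* = |S̄| and |Q| = K (the 'if' case). Then the linear program LP(𝒮,𝒯) is feasible and its optimal value b* is attained; every feasible solution (b_k)_{k∈[K]\S̄} has objective value at most Σ_{k∈[K]\S̄} b_k − 1, and there exists an optimal solution (b_k*)_{k∈[K]\S̄} with b* = Σ_{k∈[K]\S̄} b_k* − 1. -/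
open Finset
open scoped Classical

/-!
For a pair `(m, n)` attaining `a* = |S̄|` we have `A_{m,n} = S̄`, so `S_m ⊆ S̄ ⊆ S_m ∪ T_n` and the
coordinates outside `S̄` split into `T_n \ S̄` and `[K] \ (S_m ∪ T_n)`. Hence the objective equals
`∑_{k ∉ S̄} b_k` minus the smallest constraint sum, which is at least `1`. Since `Q = [K]`, every
coordinate lies in some `T_n \ S̄` or in `S̄`, so it is bounded by the objective; the objective is
therefore coercive on the closed feasible region and attains its minimum. Dividing a minimiser by its
smallest constraint sum keeps it feasible and does not increase the objective, and makes the bound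
tight. Feasibility itself comes from `S_I`: if a maximal pair covered `[K]`, deleting from `T_n` a user
outside `S̄` would leave that user as the only uncovered one, i.e. put it in `S_I ⊆ S̄`.
-/

theorem IsClosed.exists_isMinOn_of_norm_le {E : Type*} [SeminormedAddCommGroup E] [ProperSpace E]
    {s : Set E} {f : E → ℝ} (hs : IsClosed s) (hne : s.Nonempty) (hf : ContinuousOn f s)
    (hbound : ∀ x ∈ s, ‖x‖ ≤ f x) : ∃ x ∈ s, IsMinOn f s x := by
  obtain ⟨x₀, hx₀⟩ := hne
  have hcpt : IsCompact (s ∩ Metric.closedBall 0 (f x₀)) :=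
    (isCompact_closedBall 0 (f x₀)).inter_left hs
  have hx₀' : x₀ ∈ s ∩ Metric.closedBall 0 (f x₀) := ⟨hx₀, by simpa using hbound x₀ hx₀⟩
  obtain ⟨x, ⟨hxs, -⟩, hmin⟩ := hcpt.exists_isMinOn ⟨x₀, hx₀'⟩ (hf.mono Set.inter_subset_left)
  refine ⟨x, hxs, isMinOn_iff.2 fun y hy => ?_⟩
  by_cases hy' : ‖y‖ ≤ f x₀
  · exact isMinOn_iff.1 hmin y ⟨hy, by simpa using hy'⟩
  · exact (isMinOn_iff.1 hmin x₀ hx₀').trans (le_of_lt ((not_le.1 hy').trans_le (hbound y hy)))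

theorem Finset.sum_sdiff_add_sum_compl_union {α β : Type*} [Fintype α] [DecidableEq α]
    [AddCommMonoid β] {S T B : Finset α} (hS : S ⊆ B) (hB : B ⊆ S ∪ T) (f : α → β) :
    ∑ k ∈ T \ B, f k + ∑ k ∈ univ \ (S ∪ T), f k = ∑ k ∈ univ \ B, f k := by
  rw [← sum_union (disjoint_left.2 fun k hk hk' => by grind)]
  congr 1
  ext k
  grind

namespace WeakSecureSummation.Pattern

variable {K M N : ℕ} (P : Pattern K M N)

def maxPairs : Finset (Fin M × Fin N) :=
  univ.filter fun mn => (P.A mn.1 mn.2).card = P.aStar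

variable {P}

theorem mem_maxPairs {mn : Fin M × Fin N} : mn ∈ P.maxPairs ↔ (P.A mn.1 mn.2).card = P.aStar := by
  simp [maxPairs]

theorem S_subset_Sbar (m : Fin M) : P.S m ⊆ P.Sbar :=
  (subset_biUnion_of_mem P.S (mem_univ m)).trans subset_union_left

theorem exists_mem_maxPairs_of_mem_Q {k : Fin K} (hk : k ∈ P.Q) :
    ∃ mn ∈ P.maxPairs, k ∈ P.S mn.1 ∪ P.T mn.2 := by
  simp only [Q, mem_biUnion, mem_univ, true_and] at hk
  obtain ⟨mn, hmem⟩ := hk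
  split_ifs at hmem with h
  · exact ⟨mn, mem_maxPairs.2 h, hmem⟩
  · simp at hmem

theorem Sbar_subset_of_mem_maxPairs (h : P.aStar = P.Sbar.card) {mn : Fin M × Fin N}
    (hmn : mn ∈ P.maxPairs) : P.Sbar ⊆ P.S mn.1 ∪ P.T mn.2 := by
  have hA : P.A mn.1 mn.2 = P.Sbar :=
    eq_of_subset_of_card_le inter_subset_right (by rw [mem_maxPairs.1 hmn, h])
  exact hA ▸ inter_subset_left

theorem mem_Sbar_of_compl_eq_singleton {m : Fin M} {n : Fin N} {u : Fin K}
    (h : univ \ (P.S m ∪ P.T n) = {u}) : u ∈ P.Sbar := by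
  by_cases hu : u ∈ univ.biUnion P.S
  · exact mem_union_left _ hu
  have hcard : (P.S m ∪ P.T n).card = K - 1 := by
    have := congrArg card h
    rw [← compl_eq_univ_sdiff, card_compl, Fintype.card_fin, card_singleton] at this
    have := card_le_univ (P.S m ∪ P.T n)
    rw [Fintype.card_fin] at this
    omega
  exact mem_union_right _ (mem_sdiff.2 ⟨mem_filter.2 ⟨mem_univ u, m, n, hcard, h⟩, hu⟩)

theorem compl_nonempty (hT : P.MonoT) (hSbar : P.Sbar ≠ univ) (m : Fin M) (n : Fin N) :
    (univ \ (P.S m ∪ P.T n)).Nonempty := by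
  rw [sdiff_nonempty]
  intro hcover
  obtain ⟨w, -, hw⟩ := exists_of_ssubset (ssubset_univ_iff.2 hSbar)
  obtain ⟨n', hn'⟩ := hT n ((P.T n).erase w) (erase_subset _ _)
  have hwS : w ∉ P.S m := fun hwS => hw (S_subset_Sbar m hwS)
  have hsingle : univ \ (P.S m ∪ P.T n') = {w} := by
    ext x
    have := hcover (mem_univ x)
    grind
  exact hw (mem_Sbar_of_compl_eq_singleton hsingle)

theorem exists_LPFeasible (hT : P.MonoT) (h : P.aStar = P.Sbar.card) (hSbar : P.Sbar ≠ univ) :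
    ∃ b, P.LPFeasible b := by
  refine ⟨fun k => if k ∈ P.Sbar then 0 else 1, fun k hk => by simp [hk],
    fun k hk => by simp [hk], fun m n hmn => ?_⟩
  have hmn' : (m, n) ∈ P.maxPairs := mem_maxPairs.2 hmn
  have hsub : univ \ (P.S m ∪ P.T n) ⊆ univ \ P.Sbar :=
    sdiff_subset_sdiff subset_rfl (Sbar_subset_of_mem_maxPairs h hmn')
  rw [sum_congr rfl fun k hk => if_neg (mem_sdiff.1 (hsub hk)).2, sum_const, nsmul_one]
  exact_mod_cast (compl_nonempty hT hSbar m n).card_pos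

theorem LPFeasible.nonneg {b : Fin K → ℝ} (hb : P.LPFeasible b) (k : Fin K) : 0 ≤ b k := by
  by_cases hk : k ∈ P.Sbar
  · exact (hb.2.1 k hk).ge
  · exact hb.1 k hk

theorem isClosed_setOf_LPFeasible : IsClosed {b : Fin K → ℝ | P.LPFeasible b} := by
  simp only [LPFeasible, Set.ofPred_and, Set.ofPred_forall]
  refine IsClosed.inter ?_ (IsClosed.inter ?_ ?_) <;>
    refine isClosed_iInter fun _ => isClosed_iInter fun _ => ?_
  · exact isClosed_le continuous_const (continuous_apply _)
  · exact isClosed_eq (continuous_apply _) continuous_const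
  · refine isClosed_iInter fun _ => ?_
    exact isClosed_le continuous_const (continuous_finsetSum _ fun k _ => continuous_apply k)

theorem LPObj_eq_sup' (hne : P.maxPairs.Nonempty) (b : Fin K → ℝ) :
    P.LPObj b = P.maxPairs.sup' hne fun mn => ∑ k ∈ P.T mn.2 \ P.Sbar, b k := by
  rw [sup'_eq_csSup_image, LPObj]
  congr 1
  ext x
  simp [mem_maxPairs, eq_comm]

theorem continuous_LPObj (hne : P.maxPairs.Nonempty) : Continuous P.LPObj := by
  rw [funext (LPObj_eq_sup' hne)]
  exact Continuous.finset_sup'_apply hne fun mn _ =>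
    continuous_finsetSum _ fun k _ => continuous_apply k

theorem LPObj_mono (hne : P.maxPairs.Nonempty) {b b' : Fin K → ℝ} (hle : b' ≤ b) :
    P.LPObj b' ≤ P.LPObj b := by
  simp only [LPObj_eq_sup' hne]
  exact sup'_le _ _ fun mn hmn =>
    (sum_le_sum fun k _ => hle k).trans (le_sup' (fun mn => ∑ k ∈ P.T mn.2 \ P.Sbar, b k) hmn)

theorem apply_le_LPObj (hQ : P.Q = univ) {b : Fin K → ℝ} (hb : P.LPFeasible b) (k : Fin K) :
    b k ≤ P.LPObj b := by
  obtain ⟨mn, hmn, hk⟩ := exists_mem_maxPairs_of_mem_Q (hQ ▸ mem_univ k)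
  have hterm : b k ≤ ∑ i ∈ P.T mn.2 \ P.Sbar, b i := by
    by_cases hkS : k ∈ P.Sbar
    · exact (hb.2.1 k hkS).trans_le (sum_nonneg fun i _ => hb.nonneg i)
    · have hkT : k ∈ P.T mn.2 := (mem_union.1 hk).resolve_left fun h => hkS (S_subset_Sbar _ h)
      exact single_le_sum (fun i _ => hb.nonneg i) (mem_sdiff.2 ⟨hkT, hkS⟩)
  rw [LPObj_eq_sup' ⟨mn, hmn⟩]
  exact hterm.trans (le_sup' (fun mn => ∑ k ∈ P.T mn.2 \ P.Sbar, b k) hmn)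

theorem LPObj_nonneg (hne : P.maxPairs.Nonempty) {b : Fin K → ℝ} (hb : P.LPFeasible b) :
    0 ≤ P.LPObj b := by
  obtain ⟨mn, hmn⟩ := hne
  rw [LPObj_eq_sup' ⟨mn, hmn⟩]
  exact le_sup'_of_le _ hmn (sum_nonneg fun i _ => hb.nonneg i)

theorem norm_le_LPObj (hQ : P.Q = univ) (hne : P.maxPairs.Nonempty) {b : Fin K → ℝ}
    (hb : P.LPFeasible b) : ‖b‖ ≤ P.LPObj b :=
  (pi_norm_le_iff_of_nonneg (LPObj_nonneg hne hb)).2 fun k => by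
    rw [Real.norm_of_nonneg (hb.nonneg k)]
    exact apply_le_LPObj hQ hb k

theorem sum_T_sdiff_Sbar_eq (h : P.aStar = P.Sbar.card) {mn : Fin M × Fin N}
    (hmn : mn ∈ P.maxPairs) (b : Fin K → ℝ) :
    ∑ k ∈ P.T mn.2 \ P.Sbar, b k =
      ∑ k ∈ univ \ P.Sbar, b k - ∑ k ∈ univ \ (P.S mn.1 ∪ P.T mn.2), b k := by
  rw [← sum_sdiff_add_sum_compl_union (S_subset_Sbar mn.1) (Sbar_subset_of_mem_maxPairs h hmn),
    add_sub_cancel_right]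

theorem LPObj_le_sum_sub_one (h : P.aStar = P.Sbar.card) (hne : P.maxPairs.Nonempty)
    {b : Fin K → ℝ} (hb : P.LPFeasible b) : P.LPObj b ≤ ∑ k ∈ univ \ P.Sbar, b k - 1 := by
  rw [LPObj_eq_sup' hne]
  refine sup'_le _ _ fun mn hmn => ?_
  rw [sum_T_sdiff_Sbar_eq h hmn]
  linarith [hb.2.2 mn.1 mn.2 (mem_maxPairs.1 hmn)]

theorem LPObj_eq_sum_sub_one (h : P.aStar = P.Sbar.card) {b : Fin K → ℝ} (hb : P.LPFeasible b)
    {mn : Fin M × Fin N} (hmn : mn ∈ P.maxPairs)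
    (hone : ∑ k ∈ univ \ (P.S mn.1 ∪ P.T mn.2), b k = 1) :
    P.LPObj b = ∑ k ∈ univ \ P.Sbar, b k - 1 := by
  refine (LPObj_le_sum_sub_one h ⟨mn, hmn⟩ hb).antisymm ?_
  rw [LPObj_eq_sup' ⟨mn, hmn⟩, ← hone, ← sum_T_sdiff_Sbar_eq h hmn]
  exact le_sup' (fun mn => ∑ k ∈ P.T mn.2 \ P.Sbar, b k) hmn

theorem LPFeasible.exists_le_tight (hne : P.maxPairs.Nonempty) {b : Fin K → ℝ}
    (hb : P.LPFeasible b) : ∃ b' ≤ b, P.LPFeasible b' ∧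
      ∃ mn ∈ P.maxPairs, ∑ k ∈ univ \ (P.S mn.1 ∪ P.T mn.2), b' k = 1 := by
  obtain ⟨mn, hmn, hσ⟩ := exists_mem_eq_inf' hne
    fun mn => ∑ k ∈ univ \ (P.S mn.1 ∪ P.T mn.2), b k
  set σ := P.maxPairs.inf' hne fun mn => ∑ k ∈ univ \ (P.S mn.1 ∪ P.T mn.2), b k
  have hσ1 : 1 ≤ σ := le_inf' _ _ fun mn hmn => hb.2.2 mn.1 mn.2 (mem_maxPairs.1 hmn)
  have hσ0 : 0 < σ := one_pos.trans_le hσ1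
  refine ⟨fun k => b k / σ, fun k => div_le_self (hb.nonneg k) hσ1,
    ⟨fun k hk => div_nonneg (hb.1 k hk) hσ0.le, fun k hk => by simp [hb.2.1 k hk],
      fun m n hmn' => ?_⟩, mn, hmn, ?_⟩
  · rw [← sum_div, le_div_iff₀ hσ0, one_mul]
    exact inf'_le _ (mem_maxPairs (mn := (m, n)) |>.2 hmn')
  · rw [← sum_div, ← hσ, div_self hσ0.ne']

theorem bStar_eq_of_isMinOn {b : Fin K → ℝ} (hb : P.LPFeasible b)
    (hmin : IsMinOn P.LPObj {b | P.LPFeasible b} b) : P.bStar = P.LPObj b :=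
  IsLeast.csInf_eq ⟨⟨b, hb, rfl⟩, by rintro _ ⟨c, hc, rfl⟩; exact isMinOn_iff.1 hmin c hc⟩

end WeakSecureSummation.Pattern

open WeakSecureSummation in
/-- in the 'if' case, the LP is feasible and its optimum is attained;
every feasible solution has objective at most `∑_{k ∈ [K]\S̄} b_k − 1`, and some
optimal solution satisfies `b* = ∑_{k ∈ [K]\S̄} b*_k − 1`. -/
theorem lp_optimal_value_property {K M N : ℕ} (hK : 2 ≤ K)
    (P : Pattern K M N) (hP : P.Valid)
    (h1 : P.aStar ≤ K - 1) (h2 : P.aStar = P.Sbar.card) (h3 : P.Q.card = K) :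
    (∃ b, P.LPFeasible b ∧ P.LPObj b = P.bStar) ∧
    (∀ b, P.LPFeasible b → P.LPObj b ≤ (∑ k ∈ Finset.univ \ P.Sbar, b k) - 1) ∧
    (∃ b, P.LPFeasible b ∧ P.LPObj b = P.bStar ∧
      P.bStar = (∑ k ∈ Finset.univ \ P.Sbar, b k) - 1) := by
  have hQ : P.Q = univ := eq_univ_of_card _ (by simpa using h3)
  obtain ⟨mn₀, hmn₀, -⟩ := P.exists_mem_maxPairs_of_mem_Q (hQ ▸ mem_univ (⟨0, by omega⟩ : Fin K))
  have hne : P.maxPairs.Nonempty := ⟨mn₀, hmn₀⟩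
  have hSbar : P.Sbar ≠ univ := (card_lt_iff_ne_univ _).1 (by rw [Fintype.card_fin]; omega)
  obtain ⟨b₀, hb₀⟩ := P.exists_LPFeasible hP.2.1 h2 hSbar
  obtain ⟨b, hb, hmin⟩ := P.isClosed_setOf_LPFeasible.exists_isMinOn_of_norm_le ⟨b₀, hb₀⟩
    (P.continuous_LPObj hne).continuousOn fun b hb => Pattern.norm_le_LPObj hQ hne hb
  obtain ⟨b', hle, hb', mn, hmn, hone⟩ := hb.exists_le_tight hne
  have hmin' : IsMinOn P.LPObj {b | P.LPFeasible b} b' :=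
    isMinOn_iff.2 fun c hc => (Pattern.LPObj_mono hne hle).trans (isMinOn_iff.1 hmin c hc)
  have hbStar := Pattern.bStar_eq_of_isMinOn hb' hmin'
  refine ⟨⟨b', hb', hbStar.symm⟩, fun c hc => Pattern.LPObj_le_sum_sub_one h2 hne hc,
    b', hb', hbStar.symm, ?_⟩
  rw [hbStar, Pattern.LPObj_eq_sum_sub_one h2 hb' hmn hone]
end

section
/- Let F be a finite field and let a, n be integers with 1 ≤ a < n. If |F| > a · binom(n, a), then there exist vectors h_1,…,h_n ∈ F^a such that h_1 + h_2 + ⋯ + h_n = 0 and every subfamily of at most a of the vectors h_1,…,h_n is linearly independent. -/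
open Finset
open scoped Classical

/-!
Choose distinct nodes `x₁, …, xₙ ∈ F` (possible because `n ≤ a · C(n, a) < |F|`) and
put `hᵢ = wᵢ · (1, xᵢ, …, xᵢ^(a-1))` with the nodal weight `wᵢ = ∏_{j ≠ i} (xᵢ - xⱼ)⁻¹`.
Any `k ≤ a` of them are independent: their first `k` coordinates form a rescaled invertible
`k × k` Vandermonde matrix. The `t`-th coordinate of `∑ hᵢ` is the coefficient of
`X^(n-1)` in the Lagrange interpolant of `X^t` at the `n` nodes,
which is `X^t` itself, so it vanishes for `t < a ≤ n - 1`.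
-/

open Polynomial

theorem Nat.le_mul_choose {n a : ℕ} (ha : 1 ≤ a) (han : a ≤ n) : n ≤ a * n.choose a := by
  obtain ⟨m, rfl⟩ : ∃ m, n = m + 1 := ⟨n - 1, by omega⟩
  obtain ⟨b, rfl⟩ : ∃ b, a = b + 1 := ⟨a - 1, by omega⟩
  have hpos : 0 < m.choose b := Nat.choose_pos (by omega)
  calc m + 1 ≤ (m + 1) * m.choose b := Nat.le_mul_of_pos_right _ hpos
    _ = (b + 1) * (m + 1).choose (b + 1) := by rw [Nat.add_one_mul_choose_eq, mul_comm]

namespace Lagrange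

variable {F ι : Type*} [Field F] [DecidableEq ι] {s : Finset ι} {v : ι → F}

theorem coeff_basis_card_sub_one {i : ι} (hi : i ∈ s) :
    (Lagrange.basis s v i).coeff (#s - 1) = nodalWeight s v i := by
  rw [basis_eq_prod_sub_inv_mul_nodal_div hi, ← nodal_erase_eq_nodal_div hi, coeff_C_mul,
    show #s - 1 = (nodal (s.erase i) v).natDegree by rw [natDegree_nodal, card_erase_of_mem hi],
    nodal_monic.coeff_natDegree, mul_one]

/-- Compare the coefficients of `X ^ (#s - 1)` in `X ^ t` and in its Lagrange interpolant. -/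
theorem sum_nodalWeight_mul_pow_eq_zero (hvs : Set.InjOn v s) {t : ℕ} (ht : t + 1 < #s) :
    ∑ i ∈ s, nodalWeight s v i * v i ^ t = 0 := by
  have hinterp : (X ^ t : F[X]) = interpolate s v fun i => v i ^ t := by
    simpa using eq_interpolate (f := X ^ t) hvs (by rw [degree_X_pow]; exact_mod_cast (by omega))
  calc ∑ i ∈ s, nodalWeight s v i * v i ^ t
      = (interpolate s v fun i => v i ^ t).coeff (#s - 1) := by
        rw [interpolate_apply, finsetSum_coeff]
        refine sum_congr rfl fun i hi => ?_
        rw [coeff_C_mul, coeff_basis_card_sub_one hi, mul_comm]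
    _ = 0 := by rw [← hinterp, coeff_X_pow, if_neg (by omega)]

end Lagrange

theorem linearIndependent_pow_of_card_le {F ι : Type*} [Field F] [Fintype ι] {v : ι → F}
    (hv : Function.Injective v) {a : ℕ} (ha : Fintype.card ι ≤ a) :
    LinearIndependent F fun i (t : Fin a) => v i ^ (t : ℕ) := by
  let e := Fintype.equivFin ι
  have hrows : LinearIndependent F (Matrix.vandermonde (v ∘ e.symm)) :=
    Matrix.linearIndependent_rows_of_det_ne_zero
      (Matrix.det_vandermonde_ne_zero_iff.2 (hv.comp e.symm.injective))
  have htrunc : LinearIndependent F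
      (LinearMap.funLeft F F (Fin.castLE ha) ∘ fun i (t : Fin a) => v i ^ (t : ℕ)) :=
    (linearIndependent_equiv e.symm).mp hrows
  exact htrunc.of_comp _

open WeakSecureSummation in
/-- if `|F| > a * C(n, a)` with `1 ≤ a < n`, there exist vectors
`h_1,…,h_n ∈ F^a` summing to zero such that any subfamily of at most `a` of them
is linearly independent. -/
theorem exists_zero_sum_mds_vectors (F : Type) [Field F] [Fintype F]
    (a n : ℕ) (ha : 1 ≤ a) (han : a < n)
    (hF : a * n.choose a < Fintype.card F) :
    ∃ h : Fin n → (Fin a → F),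
      (∑ i, h i = 0) ∧
      ∀ s : Finset (Fin n), s.card ≤ a →
        LinearIndependent F (fun i : {x // x ∈ s} => h i.1) := by
  obtain ⟨x⟩ : Nonempty (Fin n ↪ F) := Function.Embedding.nonempty_of_card_le <| by
    simpa using (Nat.le_mul_choose ha han.le).trans hF.le
  let w : Fin n → Fˣ := fun i => Units.mk0 (Lagrange.nodalWeight univ x i)
    (Lagrange.nodalWeight_ne_zero x.injective.injOn (mem_univ i))
  refine ⟨fun i => w i • fun t : Fin a => x i ^ (t : ℕ), ?_, fun s hs => ?_⟩
  · funext t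
    simpa [Finset.sum_apply, w] using
      Lagrange.sum_nodalWeight_mul_pow_eq_zero x.injective.injOn (t := t)
        (by rw [card_univ, Fintype.card_fin]; omega)
  · exact (linearIndependent_pow_of_card_le (x.injective.comp Subtype.val_injective)
      (by rwa [Fintype.card_coe])).units_smul (w ∘ Subtype.val)
end
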